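/- arXiv:1409.5189 — 3 statements merged into one kernel-verified Lean document; each statement's English description precedes it below -/
import Mathlib

section
/- Let A be an n×n adjacency matrix of a k-edge-coloring with lexicographically sorted degree matrix M = α(A). Then there exists a permutation π of the vertices with α(π(A)) = M such that for all i < j with M_i = M_j (equal rows of the degree matrix), row i of π(A) is lexicographically ≤ row j of π(A) after deleting the entries at positions i and j from both rows. -/
/-- The degree of vertex `v` in color `c` for a `k`-edge-coloring `κ` of `K_n`. -/
def degc {n k : ℕ} (κ : Fin n → Fin n → Fin k) (c : Fin k) (v : Fin n) : ℕ :=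
  (Finset.univ.filter (fun u => u ≠ v ∧ κ v u = c)).card

/-- There is a monochromatic clique of size `m` in color `c` inside the vertex set `S`. -/
def monoCliqueIn {n k : ℕ} (κ : Fin n → Fin n → Fin k) (c : Fin k) (m : ℕ)
    (S : Finset (Fin n)) : Prop :=
  ∃ T ⊆ S, T.card = m ∧ ∀ u ∈ T, ∀ v ∈ T, u ≠ v → κ u v = c

/-- There is a monochromatic clique of size `m` in color `c`. -/
def monoClique {n k : ℕ} (κ : Fin n → Fin n → Fin k) (c : Fin k) (m : ℕ) : Prop :=
  monoCliqueIn κ c m Finset.univ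

/-- The set of `c`-colored neighbors of `v`. -/
def nbhd {n k : ℕ} (κ : Fin n → Fin n → Fin k) (c : Fin k) (v : Fin n) : Finset (Fin n) :=
  Finset.univ.filter (fun u => u ≠ v ∧ κ v u = c)

/-- The degree matrix of a coloring: entry `(i,j)` is the degree of vertex `i` in color `j`. -/
def degMatrix {n k : ℕ} (κ : Fin n → Fin n → Fin k) : Fin n → Fin k → ℕ :=
  fun i j => degc κ j i

/-- Simultaneously permuting rows and columns of an adjacency matrix by `π`. -/
def permMat {n k : ℕ} (π : Equiv.Perm (Fin n)) (A : Fin n → Fin n → Fin k) :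
    Fin n → Fin n → Fin k :=
  fun i j => A (π.symm i) (π.symm j)

/-- Row `r` of `A` as a list, after simultaneously omitting positions `i` and `j`. -/
def restrictedRow {n k : ℕ} (A : Fin n → Fin n → Fin k) (r i j : Fin n) : List (Fin k) :=
  ((List.finRange n).filter (fun t => t ≠ i ∧ t ≠ j)).map (A r)

/-- The symmetry-breaking predicate `sb*_ℓ(A, M)`: whenever rows `i < j` of the degree
matrix `M` are equal, row `i` of `A` is lexicographically at most row `j` of `A` after
simultaneously omitting positions `i` and `j`. -/
def sbStar {n k : ℕ} (A : Fin n → Fin n → Fin k) (M : Fin n → Fin k → ℕ) : Prop :=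
  ∀ i j : Fin n, i < j → (∀ c, M i c = M j c) →
    restrictedRow A i i j ≤ restrictedRow A j i j

/-! Among the permutations `π` with `α(π(A)) = M`, take one for which the list of rows of
`π(A)`, each with its diagonal entry removed, is lexicographically least. If `sb*` failed at
`i < j` with `M i = M j`, let `x ∉ {i, j}` be the first position where the restricted rows
differ, with row `j` smaller there. Transposing `i` and `j` keeps `α` equal to `M`, and by
symmetry of `A` it leaves all rows before `min x i` unchanged and strictly decreases row
`min x i`, contradicting minimality. -/

theorem List.map_lt_map_iff_of_pairwise {α β : Type*} [Preorder α] [LT β] {f g : α → β}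
    {l : List α} (hl : l.Pairwise (· < ·)) :
    l.map f < l.map g ↔ ∃ x ∈ l, f x < g x ∧ ∀ y ∈ l, y < x → f y = g y := by
  induction l with
  | nil => simp
  | cons a t ih =>
    obtain ⟨ha, ht⟩ := List.pairwise_cons.mp hl
    simp only [List.map_cons, List.cons_lt_cons_iff, ih ht, List.mem_cons, exists_eq_or_imp,
      forall_eq_or_imp, lt_irrefl, false_imp_iff, true_and]
    constructor
    · rintro (hlt | ⟨heq, x, hx, hfg, hpre⟩)
      · exact .inl ⟨hlt, fun y hy hya => absurd (ha y hy) (lt_asymm hya)⟩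
      · exact .inr ⟨x, hx, hfg, fun _ => heq, hpre⟩
    · rintro (⟨hlt, -⟩ | ⟨x, hx, hfg, heq, hpre⟩)
      · exact .inl hlt
      · exact .inr ⟨heq (ha x hx), x, hx, hfg, hpre⟩

theorem List.pairwise_lt_filter_finRange (n : ℕ) (p : Fin n → Bool) :
    ((List.finRange n).filter p).Pairwise (· < ·) :=
  (List.pairwise_lt_finRange n).sublist List.filter_sublist

section PermMat

variable {n k : ℕ}

@[simp]
theorem permMat_one (A : Fin n → Fin n → Fin k) : permMat 1 A = A := rfl

theorem permMat_mul (σ τ : Equiv.Perm (Fin n)) (A : Fin n → Fin n → Fin k) :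
    permMat (σ * τ) A = permMat σ (permMat τ A) := rfl

@[simp]
theorem permMat_swap_apply (i j r t : Fin n) (A : Fin n → Fin n → Fin k) :
    permMat (Equiv.swap i j) A r t = A (Equiv.swap i j r) (Equiv.swap i j t) := by
  simp [permMat]

theorem permMat_symm {A : Fin n → Fin n → Fin k} (hA : ∀ u v, A u v = A v u)
    (σ : Equiv.Perm (Fin n)) (u v : Fin n) : permMat σ A u v = permMat σ A v u :=
  hA _ _

theorem degc_permMat (σ : Equiv.Perm (Fin n)) (A : Fin n → Fin n → Fin k) (c : Fin k)
    (v : Fin n) : degc (permMat σ A) c v = degc A c (σ.symm v) := by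
  refine Finset.card_equiv σ.symm fun u => ?_
  rw [Finset.mem_filter, Finset.mem_filter]
  simp [permMat, σ.symm.injective.ne_iff]

theorem degMatrix_permMat (σ : Equiv.Perm (Fin n)) (A : Fin n → Fin n → Fin k) (v : Fin n) :
    degMatrix (permMat σ A) v = degMatrix A (σ.symm v) :=
  funext fun c => degc_permMat σ A c v

theorem degMatrix_permMat_swap {A : Fin n → Fin n → Fin k} {i j : Fin n}
    (h : degMatrix A i = degMatrix A j) : degMatrix (permMat (Equiv.swap i j) A) = degMatrix A :=
  funext fun v => by rw [degMatrix_permMat, Equiv.symm_swap, Equiv.apply_swap_eq_self h]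

end PermMat

section OffDiagRows

variable {n k : ℕ}

/-- The diagonal is left out: `A` is arbitrary there, and transposing two vertices moves it. -/
def offDiagRow (B : Fin n → Fin n → Fin k) (r : Fin n) : List (Fin k) :=
  ((List.finRange n).filter (· ≠ r)).map (B r)

def offDiagRows (B : Fin n → Fin n → Fin k) : List (List (Fin k)) :=
  (List.finRange n).map (offDiagRow B)

theorem offDiagRow_permMat_swap_of_lt {B : Fin n → Fin n → Fin k} (hB : ∀ u v, B u v = B v u)
    {i j x r : Fin n} (hij : i < j) (hpre : ∀ s, s ≠ i → s ≠ j → s < x → B j s = B i s)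
    (hri : r < i) (hrx : r < x) :
    offDiagRow (permMat (Equiv.swap i j) B) r = offDiagRow B r := by
  have hr := hpre r hri.ne (hri.trans hij).ne hrx
  refine List.map_congr_left fun t _ => ?_
  rw [permMat_swap_apply, Equiv.swap_apply_of_ne_of_ne hri.ne (hri.trans hij).ne]
  rcases eq_or_ne t i with rfl | hti
  · rw [Equiv.swap_apply_left, hB r j, hr, hB]
  rcases eq_or_ne t j with rfl | htj
  · rw [Equiv.swap_apply_right, hB r i, ← hr, hB]
  · rw [Equiv.swap_apply_of_ne_of_ne hti htj]

theorem offDiagRow_permMat_swap_of_ne_lt {B : Fin n → Fin n → Fin k}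
    (hB : ∀ u v, B u v = B v u) {i j x : Fin n} (hij : i < j) (hxi : x ≠ i) (hxj : x ≠ j)
    (hlt : B j x < B i x) :
    offDiagRow (permMat (Equiv.swap i j) B) x < offDiagRow B x := by
  refine (List.map_lt_map_iff_of_pairwise (List.pairwise_lt_filter_finRange _ _)).2
    ⟨i, by simpa using hxi.symm, ?_, fun s _ hsi => ?_⟩
  · rwa [permMat_swap_apply, Equiv.swap_apply_of_ne_of_ne hxi hxj, Equiv.swap_apply_left,
      hB x j, hB x i]
  · rw [permMat_swap_apply, Equiv.swap_apply_of_ne_of_ne hxi hxj,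
      Equiv.swap_apply_of_ne_of_ne hsi.ne (hsi.trans hij).ne]

theorem offDiagRow_permMat_swap_left_lt {B : Fin n → Fin n → Fin k}
    (hB : ∀ u v, B u v = B v u) {i j x : Fin n} (hxi : x ≠ i) (hxj : x ≠ j)
    (hlt : B j x < B i x) (hpre : ∀ s, s ≠ i → s ≠ j → s < x → B j s = B i s) :
    offDiagRow (permMat (Equiv.swap i j) B) i < offDiagRow B i := by
  refine (List.map_lt_map_iff_of_pairwise (List.pairwise_lt_filter_finRange _ _)).2
    ⟨x, by simpa using hxi, ?_, fun s hs hsx => ?_⟩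
  · rwa [permMat_swap_apply, Equiv.swap_apply_left, Equiv.swap_apply_of_ne_of_ne hxi hxj]
  have hsi : s ≠ i := by simpa using hs
  rw [permMat_swap_apply, Equiv.swap_apply_left]
  rcases eq_or_ne s j with rfl | hsj
  · rw [Equiv.swap_apply_right, hB]
  · rw [Equiv.swap_apply_of_ne_of_ne hsi hsj, hpre s hsi hsj hsx]

theorem offDiagRows_permMat_swap_lt {B : Fin n → Fin n → Fin k} (hB : ∀ u v, B u v = B v u)
    {i j : Fin n} (hij : i < j) (hviol : restrictedRow B j i j < restrictedRow B i i j) :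
    offDiagRows (permMat (Equiv.swap i j) B) < offDiagRows B := by
  obtain ⟨x, hx, hlt, hpre⟩ :=
    (List.map_lt_map_iff_of_pairwise (List.pairwise_lt_filter_finRange _ _)).1 hviol
  have hxi : x ≠ i := by simp_all
  have hxj : x ≠ j := by simp_all
  replace hpre : ∀ s, s ≠ i → s ≠ j → s < x → B j s = B i s := fun s hsi hsj =>
    hpre s (by simp [hsi, hsj])
  refine (List.map_lt_map_iff_of_pairwise (List.pairwise_lt_finRange n)).2 ?_
  rcases hxi.lt_or_gt with hx | hx
  · exact ⟨x, List.mem_finRange x, offDiagRow_permMat_swap_of_ne_lt hB hij hxi hxj hlt,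
      fun r _ hr => offDiagRow_permMat_swap_of_lt hB hij hpre (hr.trans hx) hr⟩
  · exact ⟨i, List.mem_finRange i, offDiagRow_permMat_swap_left_lt hB hxi hxj hlt hpre,
      fun r _ hr => offDiagRow_permMat_swap_of_lt hB hij hpre hr (hr.trans hx)⟩

end OffDiagRows

theorem exists_perm_sbStar_general {n k : ℕ} (A : Fin n → Fin n → Fin k)
    (hsym : ∀ u v, A u v = A v u)
    (M : Fin n → Fin k → ℕ) (hM : degMatrix A = M) :
    ∃ π : Equiv.Perm (Fin n),
      degMatrix (permMat π A) = M ∧ sbStar (permMat π A) M := by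
  obtain ⟨π, hπ, hmin⟩ :=
    (Finset.univ.filter fun σ => degMatrix (permMat σ A) = M).exists_min_image
      (fun σ => offDiagRows (permMat σ A)) ⟨1, by simpa using hM⟩
  replace hπ : degMatrix (permMat π A) = M := (Finset.mem_filter.mp hπ).2
  refine ⟨π, hπ, fun i j hij hMij => not_lt.mp fun hviol => ?_⟩
  have hswap : degMatrix (permMat (Equiv.swap i j * π) A) = M := by
    rw [permMat_mul, degMatrix_permMat_swap (by rw [hπ]; exact funext hMij), hπ]
  refine (hmin _ (by simpa using hswap)).not_gt ?_
  rw [permMat_mul]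
  exact offDiagRows_permMat_swap_lt (permMat_symm hsym π) hij hviol

/-- If `A` has lexicographically sorted degree matrix `M = α(A)`, then some degree-matrix
preserving vertex permutation `π` makes the symmetry-breaking predicate hold. -/
theorem exists_perm_sbStar {n k : ℕ} (A : Fin n → Fin n → Fin k)
    (hsym : ∀ u v, A u v = A v u)
    (M : Fin n → Fin k → ℕ) (hM : degMatrix A = M)
    (hsorted : ∀ i j : Fin n, i ≤ j → List.ofFn (M j) ≤ List.ofFn (M i)) :
    ∃ π : Equiv.Perm (Fin n),
      degMatrix (permMat π A) = M ∧ sbStar (permMat π A) M :=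
  exists_perm_sbStar_general A hsym M hM
end

section
/- In any 3-edge-coloring of K_17 there is a monochromatic triangle; equivalently, there is no (3,3,3;17) Ramsey coloring, so R(3,3,3) ≤ 17. -/
lemma third_color : ∀ c d : Fin 3, c ≠ d → ∃ e : Fin 3, ∀ a : Fin 3, a ≠ c → a ≠ d → a = e := by
  decide

lemma triangle_mem {n : ℕ} (κ : Fin n → Fin n → Fin 3) (hsym : ∀ u v, κ u v = κ v u)
    (c : Fin 3) (a b d : Fin n)
    (hab : a ≠ b) (had : a ≠ d) (hbd : b ≠ d)
    (h1 : κ a b = c) (h2 : κ a d = c) (h3 : κ b d = c) :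
    ∃ T ⊆ (Finset.univ : Finset (Fin n)), T.card = 3 ∧
      ∀ u ∈ T, ∀ v ∈ T, u ≠ v → κ u v = c := by
  refine ⟨{a, b, d}, Finset.subset_univ _, ?_, ?_⟩
  · rw [Finset.card_insert_of_notMem (by simp [hab, had]),
      Finset.card_insert_of_notMem (by simp [hbd]), Finset.card_singleton]
  · intro u hu v hv huv
    simp only [Finset.mem_insert, Finset.mem_singleton] at hu hv
    rcases hu with h|h|h <;> rcases hv with h'|h'|h' <;> subst h <;> subst h' <;>
      first
        | exact absurd rfl huv
        | assumption
        | (rw [hsym]; assumption)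

/-- Every 3-edge-coloring of `K_17` contains a monochromatic triangle: there is no
`(3,3,3;17)` Ramsey coloring, i.e. `R(3,3,3) ≤ 17`. -/
theorem no_333_17 (κ : Fin 17 → Fin 17 → Fin 3) (hsym : ∀ u v, κ u v = κ v u) :
    ∃ c : Fin 3, monoClique κ c 3 := by
  classical
  set s : Finset (Fin 17) := Finset.univ.filter (fun u => u ≠ 0) with hs
  have hscard : s.card = 16 := by decide
  obtain ⟨c, -, hc⟩ := Finset.exists_lt_card_fiber_of_mul_lt_card_of_maps_to
    (f := fun u => κ 0 u) (t := (Finset.univ : Finset (Fin 3))) (n := 5)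
    (fun a _ => Finset.mem_univ _) (by rw [hscard]; norm_num)
  set S : Finset (Fin 17) := s.filter (fun u => κ 0 u = c) with hS
  have hSmem : ∀ u ∈ S, u ≠ 0 ∧ κ 0 u = c := by
    intro u hu
    simp only [hS, hs, Finset.mem_filter, Finset.mem_univ, true_and] at hu
    exact hu
  by_cases hedge : ∃ u ∈ S, ∃ w ∈ S, u ≠ w ∧ κ u w = c
  · obtain ⟨u, hu, w, hw, huw, hc'⟩ := hedge
    obtain ⟨hu0, hcu⟩ := hSmem u hu
    obtain ⟨hw0, hcw⟩ := hSmem w hw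
    exact ⟨c, triangle_mem κ hsym c 0 u w (Ne.symm hu0) (Ne.symm hw0) huw hcu hcw hc'⟩
  push_neg at hedge
  -- inner: S has ≥ 6 vertices, all edges inside S avoid c
  have hS6 : 6 ≤ S.card := hc
  have hSne : S.Nonempty := Finset.card_pos.mp (by omega)
  obtain ⟨v, hv⟩ := hSne
  set A : Finset (Fin 17) := S.erase v with hA
  have hA5 : 5 ≤ A.card := by
    rw [hA, Finset.card_erase_of_mem hv]; omega
  obtain ⟨d, hdmem, hd⟩ := Finset.exists_lt_card_fiber_of_mul_lt_card_of_maps_to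
    (s := A) (f := fun u => κ v u) (t := Finset.univ.erase c) (n := 2)
    (by
      intro x hx
      have hxS : x ∈ S := Finset.mem_of_mem_erase hx
      have hxv : x ≠ v := Finset.ne_of_mem_erase hx
      exact Finset.mem_erase.mpr ⟨hedge v hv x hxS (Ne.symm hxv), Finset.mem_univ _⟩)
    (by
      have : (Finset.univ.erase c).card = 2 := by
        rw [Finset.card_erase_of_mem (Finset.mem_univ c)]; rfl
      omega)
  have hdc : d ≠ c := Finset.ne_of_mem_erase hdmem
  set T : Finset (Fin 17) := A.filter (fun u => κ v u = d) with hT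
  have hTmem : ∀ u ∈ T, u ∈ S ∧ u ≠ v ∧ κ v u = d := by
    intro u hu
    rw [hT, Finset.mem_filter] at hu
    exact ⟨Finset.mem_of_mem_erase hu.1, Finset.ne_of_mem_erase hu.1, hu.2⟩
  by_cases hedge2 : ∃ x ∈ T, ∃ y ∈ T, x ≠ y ∧ κ x y = d
  · obtain ⟨x, hx, y, hy, hxy, hd'⟩ := hedge2
    obtain ⟨-, hxv, hdx⟩ := hTmem x hx
    obtain ⟨-, hyv, hdy⟩ := hTmem y hy
    exact ⟨d, triangle_mem κ hsym d v x y (Ne.symm hxv) (Ne.symm hyv) hxy hdx hdy hd'⟩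
  push_neg at hedge2
  obtain ⟨e, he⟩ := third_color c d (Ne.symm hdc)
  obtain ⟨T', hT'sub, hT'card⟩ := Finset.exists_subset_card_eq (show 3 ≤ T.card by omega)
  refine ⟨e, T', Finset.subset_univ _, hT'card, ?_⟩
  intro x hx y hy hxy
  have hxT := hT'sub hx
  have hyT := hT'sub hy
  have hxS := (hTmem x hxT).1
  have hyS := (hTmem y hyT).1
  exact he _ (hedge x hxS y hyS hxy) (hedge2 x hxT y hyT hxy)
end

section
/- There exists a 3-edge-coloring of K_16 with no monochromatic triangle; hence R(3,3,3) ≥ 17 (and combined with the upper bound, R(3,3,3) = 17). -/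
def tbl : Fin 16 → Fin 16 → Fin 3 :=
  ![![0,0,1,1,2,2,2,1,0,2,0,1,0,1,2,0],
   ![0,0,1,1,2,2,1,2,2,0,1,0,1,0,0,2],
   ![1,1,0,0,2,1,2,2,0,1,0,2,2,0,0,1],
   ![1,1,0,0,1,2,2,2,1,0,2,0,0,2,1,0],
   ![2,2,2,1,0,0,1,1,0,1,2,0,0,2,0,1],
   ![2,2,1,2,0,0,1,1,1,0,0,2,2,0,1,0],
   ![2,1,2,2,1,1,0,0,2,0,0,1,0,1,0,2],
   ![1,2,2,2,1,1,0,0,0,2,1,0,1,0,2,0],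
   ![0,2,0,1,0,1,2,0,0,0,1,1,2,2,2,1],
   ![2,0,1,0,1,0,0,2,0,0,1,1,2,2,1,2],
   ![0,1,0,2,2,0,0,1,1,1,0,0,2,1,2,2],
   ![1,0,2,0,0,2,1,0,1,1,0,0,1,2,2,2],
   ![0,1,2,0,0,2,0,1,2,2,2,1,0,0,1,1],
   ![1,0,0,2,2,0,1,0,2,2,1,2,0,0,1,1],
   ![2,0,0,1,0,1,0,2,2,1,2,2,1,1,0,0],
   ![0,2,1,0,1,0,2,0,1,2,2,2,1,1,0,0]]

lemma tbl_symm : ∀ u v, tbl u v = tbl v u := by decide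

lemma tbl_tri : ∀ c : Fin 3, ∀ u v w : Fin 16, u ≠ v → u ≠ w → v ≠ w →
    ¬(tbl u v = c ∧ tbl u w = c ∧ tbl v w = c) := by decide

/-- There is a 3-edge-coloring of `K_16` with no monochromatic triangle, hence
`R(3,3,3) ≥ 17`. -/
theorem exists_333_16 :
    ∃ κ : Fin 16 → Fin 16 → Fin 3,
      (∀ u v, κ u v = κ v u) ∧ ∀ c : Fin 3, ¬ monoClique κ c 3 := by
  refine ⟨tbl, tbl_symm, fun c h => ?_⟩
  obtain ⟨T, -, hcard, hmono⟩ := h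
  obtain ⟨u, v, w, huv, huw, hvw, rfl⟩ := Finset.card_eq_three.mp hcard
  exact tbl_tri c u v w huv huw hvw
    ⟨hmono u (by simp) v (by simp) huv, hmono u (by simp) w (by simp) huw,
     hmono v (by simp) w (by simp) hvw⟩
end
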